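/- arXiv:2203.08342 — 4 statements merged into one kernel-verified Lean document; each statement's English description precedes it below -/
import Mathlib

section
/- For any prime number p ≥ 5 and any integer n ≥ 2, the group SL_n(ℤ_p) of n×n matrices over the p-adic integers with determinant 1 is a perfect group, i.e., it equals its own commutator subgroup. -/
/-!
Over a local ring, a pivot in any column of a matrix of determinant one can be moved to the
diagonal and normalised to `1` by transvections, so Gaussian elimination writes every element of
`SL_n` as a product of transvections. Conjugating `1 + b E_ij` by `diag(u, u⁻¹)` multiplies `b`
by `u²`, so every transvection is a commutator as soon as some unit `u` has `u² - 1` a unit too.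
In `ℤ_p` with `p ≥ 5`, `u = 2` works because `2` and `3` are units.
-/

open scoped commutatorElement

namespace Matrix

variable {ι R : Type*} [DecidableEq ι]

def IsOneOutside [Zero R] [One R] (s : Finset ι) (M : Matrix ι ι R) : Prop :=
  ∀ i j, (i ∉ s ∨ j ∉ s) → M i j = (1 : Matrix ι ι R) i j

namespace IsOneOutside

lemma eq_one [Zero R] [One R] {M : Matrix ι ι R} (hM : IsOneOutside ∅ M) : M = 1 :=
  ext fun i j => hM i j (Or.inl (Finset.notMem_empty i))

variable [Fintype ι] [CommRing R]

lemma det_eq {a : ι} {M : Matrix ι ι R} (hM : IsOneOutside {a} M) : M.det = M a a := by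
  have hdiag : M = diagonal fun i => M i i := by
    ext i j
    rcases eq_or_ne i j with rfl | hij
    · rw [diagonal_apply_eq]
    · have hout : i ∉ ({a} : Finset ι) ∨ j ∉ ({a} : Finset ι) := by
        by_contra! h
        exact hij ((Finset.mem_singleton.1 h.1).trans (Finset.mem_singleton.1 h.2).symm)
      rw [diagonal_apply_ne _ hij, hM i j hout, one_apply_ne hij]
  conv_lhs => rw [hdiag, det_diagonal]
  refine Finset.prod_eq_single a (fun i _ hi => ?_) (by simp)
  rw [hM i i (Or.inl (by simpa using hi)), one_apply_eq]

lemma transvection_mul {t : Finset ι} {M : Matrix ι ι R} (hM : IsOneOutside t M) {i j : ι}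
    (hi : i ∈ t) (hj : j ∈ t) (c : R) : IsOneOutside t (transvection i j c * M) := by
  intro x y hxy
  rcases eq_or_ne x i with rfl | hx
  · have hy : y ∉ t := hxy.resolve_left (not_not.2 hi)
    have hne : ∀ z ∈ t, z ≠ y := fun z hz h => hy (h ▸ hz)
    rw [transvection_mul_apply_same, hM x y hxy, hM j y (Or.inr hy), one_apply_ne (hne x hi),
      one_apply_ne (hne j hj), mul_zero, add_zero]
  · rw [transvection_mul_apply_of_ne _ _ _ _ hx, hM x y hxy]

end IsOneOutside

lemma exists_isUnit_apply_of_isUnit_det [Fintype ι] [CommRing R] [IsLocalRing R]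
    {M : Matrix ι ι R} (hM : IsUnit M.det) (k : ι) : ∃ i, IsUnit (M i k) := by
  by_contra! h
  have hsum : ∑ i, adjugate M k i * M i k = M.det := by
    rw [← mul_apply, adjugate_mul, smul_apply, one_apply_eq, smul_eq_mul, mul_one]
  refine (IsLocalRing.mem_maximalIdeal _).1 ?_ hM
  rw [← hsum]
  exact Ideal.sum_mem _ fun i _ => Ideal.mul_mem_left _ _ ((IsLocalRing.mem_maximalIdeal _).2 (h i))

end Matrix

namespace Matrix.SpecialLinearGroup

variable {ι R : Type*} [Fintype ι] [DecidableEq ι] [CommRing R]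

def diagUnits {i j : ι} (hij : i ≠ j) (u : Rˣ) : SpecialLinearGroup ι R :=
  ⟨diagonal (Function.update (Function.update 1 j ↑u⁻¹) i ↑u), by
    rw [det_diagonal, Finset.prod_update_of_mem (Finset.mem_univ i),
      Finset.prod_update_of_mem (by simpa using hij.symm)]
    simp⟩

lemma coe_diagUnits {i j : ι} (hij : i ≠ j) (u : Rˣ) :
    (diagUnits hij u : Matrix ι ι R) =
      diagonal (Function.update (Function.update 1 j ↑u⁻¹) i ↑u) :=
  rfl

lemma diagUnits_mul_transvection {i j : ι} (hij : i ≠ j) (u : Rˣ) (b : R) :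
    diagUnits hij u * transvection hij b = transvection hij (u * u * b) * diagUnits hij u := by
  ext k l
  rw [coe_mul, coe_mul, coe_diagUnits, transvection_coe, transvection_coe, diagonal_mul,
    mul_diagonal]
  simp only [add_apply, one_apply, single_apply, Function.update_apply]
  split_ifs <;> grind [Units.mul_inv]

lemma commutatorElement_diagUnits_transvection {i j : ι} (hij : i ≠ j) (u : Rˣ) (b : R) :
    ⁅diagUnits hij u, transvection hij b⁆ = transvection hij ((u ^ 2 - 1) * b) := by
  rw [commutatorElement_def, diagUnits_mul_transvection, mul_inv_cancel_right,
    transvection_inv, ← transvection_add]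
  ring_nf

lemma transvection_mem_commutator_of_isUnit {u : Rˣ} (hu : IsUnit ((u : R) ^ 2 - 1)) {i j : ι}
    (hij : i ≠ j) (c : R) : transvection hij c ∈ commutator (SpecialLinearGroup ι R) := by
  obtain ⟨v, hv⟩ := hu
  have hc : c = ((u : R) ^ 2 - 1) * (↑v⁻¹ * c) := by rw [← hv, ← mul_assoc, Units.mul_inv, one_mul]
  rw [hc, ← commutatorElement_diagUnits_transvection]
  exact Subgroup.commutator_mem_commutator (Subgroup.mem_top _) (Subgroup.mem_top _)

variable (ι R) in
def elementarySubgroup : Subgroup (SpecialLinearGroup ι R) :=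
  Subgroup.closure {A | ∃ (i j : ι) (hij : i ≠ j) (c : R), transvection hij c = A}

lemma transvection_mem_elementarySubgroup {i j : ι} (hij : i ≠ j) (c : R) :
    transvection hij c ∈ elementarySubgroup ι R :=
  Subgroup.subset_closure ⟨i, j, hij, c, rfl⟩

/-- The hypothesis makes `single i j (C i j) * single k l (C k l)` vanish for all entries, so
`1 + C` is the product of the transvections `1 + C i j • E i j`. -/
lemma exists_mem_elementarySubgroup_coe_eq_one_add (S : Set ι) (C : Matrix ι ι R)
    (hC : ∀ i j, C i j ≠ 0 → i ∈ S ∧ j ∉ S) :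
    ∃ L ∈ elementarySubgroup ι R, (L : Matrix ι ι R) = 1 + C := by
  suffices ∀ P : Finset (ι × ι), ∃ L ∈ elementarySubgroup ι R,
      (L : Matrix ι ι R) = 1 + ∑ p ∈ P, single p.1 p.2 (C p.1 p.2) by
    obtain ⟨L, hL, hLC⟩ := this Finset.univ
    refine ⟨L, hL, ?_⟩
    rw [hLC, Fintype.sum_prod_type]
    exact congrArg _ (matrix_eq_sum_single C).symm
  intro P
  induction P using Finset.induction with
  | empty => exact ⟨1, one_mem _, by simp⟩
  | @insert q P hq ih =>
    obtain ⟨L, hL, hLC⟩ := ih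
    rw [Finset.sum_insert hq]
    by_cases hCq : C q.1 q.2 = 0
    · exact ⟨L, hL, by rw [hLC, hCq, single_zero, zero_add]⟩
    obtain ⟨hq₁, hq₂⟩ := hC q.1 q.2 hCq
    have hne : q.1 ≠ q.2 := fun h => hq₂ (h ▸ hq₁)
    refine ⟨L * transvection hne (C q.1 q.2),
      mul_mem hL (transvection_mem_elementarySubgroup hne _), ?_⟩
    have hkill : (∑ p ∈ P, single p.1 p.2 (C p.1 p.2)) * single q.1 q.2 (C q.1 q.2) = 0 := by
      rw [Finset.sum_mul]
      refine Finset.sum_eq_zero fun p _ => ?_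
      by_cases hCp : C p.1 p.2 = 0
      · rw [hCp, single_zero, zero_mul]
      · exact single_mul_single_of_ne _ _ _ _ (fun h => (hC p.1 p.2 hCp).2 (by rwa [h])) _
    rw [coe_mul, hLC, transvection_coe, mul_add, add_mul, add_mul, hkill]
    simp only [mul_one, one_mul, add_zero]
    abel

lemma exists_mem_elementarySubgroup_mul_apply (k : ι) (v : ι → R) (hv : v k = 0)
    (M : Matrix ι ι R) :
    ∃ L ∈ elementarySubgroup ι R, ∀ i j, ((L : Matrix ι ι R) * M) i j = M i j + v i * M k j := by
  obtain ⟨L, hL, hLC⟩ := exists_mem_elementarySubgroup_coe_eq_one_add {k}ᶜ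
    (of fun i j => if j = k then v i else 0) fun i j h => by
      simp only [of_apply, ne_eq, ite_eq_right_iff, Classical.not_imp] at h
      exact ⟨fun hi => h.2 (by rw [Set.mem_singleton_iff.1 hi, hv]),
        by simp [h.1]⟩
  refine ⟨L, hL, fun i j => ?_⟩
  rw [hLC, add_mul, one_mul, add_apply, mul_apply]
  simp [ite_mul]

lemma exists_mem_elementarySubgroup_apply_mul (k : ι) (w : ι → R) (hw : w k = 0)
    (M : Matrix ι ι R) :
    ∃ L ∈ elementarySubgroup ι R, ∀ i j, (M * (L : Matrix ι ι R)) i j = M i j + M i k * w j := by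
  obtain ⟨L, hL, hLC⟩ := exists_mem_elementarySubgroup_coe_eq_one_add {k}
    (of fun i j => if i = k then w j else 0) fun i j h => by
      simp only [of_apply, ne_eq, ite_eq_right_iff, Classical.not_imp] at h
      exact ⟨h.1, fun hj => h.2 (by rw [Set.mem_singleton_iff.1 hj, hw])⟩
  refine ⟨L, hL, fun i j => ?_⟩
  rw [hLC, mul_add, mul_one, add_apply, mul_apply]
  simp [mul_ite]

lemma exists_mem_elementarySubgroup_mul_apply_eq_one {t : Finset ι} {A : SpecialLinearGroup ι R}
    (hA : IsOneOutside t (A : Matrix ι ι R)) {x y : ι} (hx : x ∈ t) (hy : y ∈ t) (hxy : x ≠ y)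
    {k : ι} (hu : IsUnit (A y k)) :
    ∃ P ∈ elementarySubgroup ι R, IsOneOutside t ((P * A : SpecialLinearGroup ι R) : Matrix ι ι R) ∧
      (P * A) x k = 1 := by
  refine ⟨transvection hxy ((1 - A x k) * ↑hu.unit⁻¹), transvection_mem_elementarySubgroup _ _,
    hA.transvection_mul hx hy _, ?_⟩
  change (Matrix.transvection x y _ * (A : Matrix ι ι R) : Matrix ι ι R) x k = 1
  rw [transvection_mul_apply_same, mul_assoc, hu.val_inv_mul, mul_one, add_sub_cancel]

lemma exists_mem_elementarySubgroup_mul_apply_self_eq_one [IsLocalRing R] {a : ι} {s : Finset ι}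
    (ha : a ∉ s) {A : SpecialLinearGroup ι R} (hA : IsOneOutside (insert a s) (A : Matrix ι ι R)) :
    ∃ P ∈ elementarySubgroup ι R,
      IsOneOutside (insert a s) ((P * A : SpecialLinearGroup ι R) : Matrix ι ι R) ∧
      (P * A) a a = 1 := by
  obtain ⟨i, hi⟩ := exists_isUnit_apply_of_isUnit_det (A.det_coe.symm ▸ isUnit_one) a
  have hi_mem : i ∈ insert a s := by
    by_contra h
    have hia : i ≠ a := (ne_of_mem_of_not_mem (Finset.mem_insert_self a s) h).symm
    rw [hA i a (Or.inl h), one_apply_ne hia] at hi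
    exact not_isUnit_zero hi
  -- If the unit found is the pivot itself, it is first copied to another row of the block.
  rcases eq_or_ne i a with rfl | hia
  · rcases s.eq_empty_or_nonempty with rfl | ⟨b, hb⟩
    · exact ⟨1, one_mem _, by rwa [one_mul], by rw [one_mul, ← hA.det_eq, A.det_coe]⟩
    have hba : b ≠ i := ne_of_mem_of_not_mem hb ha
    obtain ⟨P, hP, hPA, hPAb⟩ := exists_mem_elementarySubgroup_mul_apply_eq_one hA
      (Finset.mem_insert_of_mem hb) hi_mem hba hi
    obtain ⟨Q, hQ, hQPA, hQPAa⟩ := exists_mem_elementarySubgroup_mul_apply_eq_one hPA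
      hi_mem (Finset.mem_insert_of_mem hb) hba.symm (hPAb ▸ isUnit_one)
    exact ⟨Q * P, mul_mem hQ hP, by rwa [mul_assoc], by rwa [mul_assoc]⟩
  · exact exists_mem_elementarySubgroup_mul_apply_eq_one hA (Finset.mem_insert_self a s) hi_mem
      hia.symm hi

lemma exists_mem_elementarySubgroup_isOneOutside_mul_mul {a : ι} {s : Finset ι}
    {B : SpecialLinearGroup ι R} (hB : IsOneOutside (insert a s) (B : Matrix ι ι R))
    (hBa : B a a = 1) :
    ∃ L ∈ elementarySubgroup ι R, ∃ R' ∈ elementarySubgroup ι R,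
      IsOneOutside s ((L * B * R' : SpecialLinearGroup ι R) : Matrix ι ι R) := by
  obtain ⟨L, hL, hLB⟩ := exists_mem_elementarySubgroup_mul_apply a
    (fun i => if i = a then 0 else -B i a) (by simp) B
  obtain ⟨R', hR', hLBR⟩ := exists_mem_elementarySubgroup_apply_mul a
    (fun j => if j = a then 0 else -B a j) (by simp) (L * B)
  have hcol : ∀ x, ((L : Matrix ι ι R) * B) x a = (1 : Matrix ι ι R) x a := by
    intro x
    rcases eq_or_ne x a with rfl | hx
    · simp [hLB, hBa]
    · simp [hLB, hBa, hx]
  refine ⟨L, hL, R', hR', fun x y hxy => ?_⟩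
  rw [coe_mul, coe_mul, hLBR, hcol, hLB]
  rcases eq_or_ne x a with hx | hx <;> rcases eq_or_ne y a with hy | hy
  · subst hx hy
    simp [hBa]
  · simp [hx, hy, Ne.symm hy, one_apply]
  · simp [hx, hy, hBa]
  · have hout : x ∉ insert a s ∨ y ∉ insert a s := by simpa [hx, hy] using hxy
    simp only [hx, hy, if_false, one_apply_ne hx, zero_mul, add_zero]
    rcases hout with h | h
    · rw [hB x y (.inl h), hB x a (.inl h), one_apply_ne hx]
      ring
    · rw [hB x y (.inr h), hB a y (.inr h), one_apply_ne hy.symm]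
      ring

theorem elementarySubgroup_eq_top [IsLocalRing R] : elementarySubgroup ι R = ⊤ := by
  suffices h : ∀ (s : Finset ι) (A : SpecialLinearGroup ι R),
      IsOneOutside s (A : Matrix ι ι R) → A ∈ elementarySubgroup ι R from
    eq_top_iff.2 fun A _ => h Finset.univ A fun i j hij => by simp at hij
  intro s
  induction s using Finset.induction with
  | empty => exact fun A hA => (Subtype.ext hA.eq_one : A = 1) ▸ one_mem _
  | @insert a s ha ih =>
    intro A hA
    obtain ⟨P, hP, hPA, hPAa⟩ := exists_mem_elementarySubgroup_mul_apply_self_eq_one ha hA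
    obtain ⟨L, hL, R', hR', hLPAR⟩ := exists_mem_elementarySubgroup_isOneOutside_mul_mul hPA hPAa
    have := ih _ hLPAR
    rwa [Subgroup.mul_mem_cancel_right _ hR', Subgroup.mul_mem_cancel_left _ hL,
      Subgroup.mul_mem_cancel_left _ hP] at this

lemma elementarySubgroup_le_commutator {u : Rˣ} (hu : IsUnit ((u : R) ^ 2 - 1)) :
    elementarySubgroup ι R ≤ commutator (SpecialLinearGroup ι R) :=
  (Subgroup.closure_le _).2 fun _ ⟨_, _, hij, c, hA⟩ =>
    hA ▸ transvection_mem_commutator_of_isUnit hu hij c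

theorem commutator_eq_top_of_isLocalRing [IsLocalRing R] {u : Rˣ}
    (hu : IsUnit ((u : R) ^ 2 - 1)) : commutator (SpecialLinearGroup ι R) = ⊤ :=
  eq_top_iff.2 (elementarySubgroup_eq_top (ι := ι) (R := R) ▸ elementarySubgroup_le_commutator hu)

end Matrix.SpecialLinearGroup

theorem PadicInt.isUnit_natCast_iff {p : ℕ} [Fact p.Prime] (k : ℕ) :
    IsUnit (k : ℤ_[p]) ↔ ¬p ∣ k := by
  rw [← not_iff_not, not_not, not_isUnit_iff, ← Int.cast_natCast, norm_int_lt_one_iff_dvd,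
    Int.natCast_dvd_natCast]

theorem SLnZp_perfect_general (p : ℕ) [Fact p.Prime] (h5 : 5 ≤ p) (n : ℕ) :
    commutator (Matrix.SpecialLinearGroup (Fin n) ℤ_[p]) = ⊤ := by
  have hunit : ∀ k : ℕ, 0 < k → k < p → IsUnit (k : ℤ_[p]) := fun k hk hkp =>
    (PadicInt.isUnit_natCast_iff k).2 (Nat.not_dvd_of_pos_of_lt hk hkp)
  obtain ⟨two, htwo⟩ := hunit 2 (by norm_num) (by omega)
  refine Matrix.SpecialLinearGroup.commutator_eq_top_of_isLocalRing (u := two) ?_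
  rw [htwo, show ((2 : ℕ) : ℤ_[p]) ^ 2 - 1 = ((3 : ℕ) : ℤ_[p]) by push_cast; ring]
  exact hunit 3 (by norm_num) (by omega)

/-- For any prime `p ≥ 5` and any `n ≥ 2`, the group `SL_n(ℤ_p)` is perfect,
i.e. it equals its own commutator subgroup. -/
theorem SLnZp_perfect (p : ℕ) [Fact p.Prime] (h5 : 5 ≤ p) (n : ℕ) (hn : 2 ≤ n) :
    commutator (Matrix.SpecialLinearGroup (Fin n) ℤ_[p]) = ⊤ :=
  SLnZp_perfect_general p h5 n
end

section
/- Let G be a finite group, R a commutative ring, and M an R[G]-module. Suppose there exists a central element σ of G and a unit λ of R with λ - 1 invertible in R, such that σ acts on M as multiplication by λ. Then the group cohomology H^1(G, M) vanishes. -/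
/-!
For a 1-cocycle `f`, expanding `f (g * σ) = f (σ * g)` with the cocycle identity gives
`(σ - 1) • f g = (g - 1) • f σ`. When `σ` acts as `λ` and `λ - 1` is a unit, this exhibits `f` as
the coboundary of `(λ - 1)⁻¹ • f σ`.
-/

namespace groupCohomology

variable {k G : Type} [CommRing k] [Group G] {A : Rep k G}

theorem cocycles₁_apply_sub_eq_of_mem_center (f : cocycles₁ A) {σ : G}
    (hσ : σ ∈ Subgroup.center G) (g : G) :
    A.ρ σ (f g) - f g = A.ρ g (f σ) - f σ := by
  have hf := (mem_cocycles₁_iff (f : G → A)).1 f.2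
  have hcomm : f (g * σ) = f (σ * g) := by rw [Subgroup.mem_center_iff.1 hσ g]
  rw [hf, hf] at hcomm
  linear_combination (norm := module) -hcomm

theorem mem_coboundaries₁_of_mem_center_of_forall_eq_smul (f : cocycles₁ A) {σ : G}
    (hσ : σ ∈ Subgroup.center G) {c : k} (hc : IsUnit (c - 1)) (hact : ∀ m : A, A.ρ σ m = c • m) :
    ⇑f ∈ coboundaries₁ A := by
  obtain ⟨u, hu⟩ := hc
  refine ⟨(↑u⁻¹ : k) • f σ, funext fun g => ?_⟩
  have key : (c - 1) • f g = A.ρ g (f σ) - f σ := by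
    rw [sub_smul, one_smul, ← hact, cocycles₁_apply_sub_eq_of_mem_center f hσ]
  change A.ρ g ((↑u⁻¹ : k) • f σ) - (↑u⁻¹ : k) • f σ = f g
  rw [map_smul, ← smul_sub, ← key, ← hu, smul_smul, Units.inv_mul, one_smul]

theorem subsingleton_H1_of_forall_mem_coboundaries₁
    (h : ∀ f : cocycles₁ A, ⇑f ∈ coboundaries₁ A) : Subsingleton (H1 A) := by
  suffices hzero : ∀ x : H1 A, x = 0 from ⟨fun x y => (hzero x).trans (hzero y).symm⟩
  intro x
  induction x using H1_induction_on with
  | h f => exact (H1π_eq_zero_iff f).2 (h f)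

end groupCohomology

theorem H1_eq_zero_of_central_unit_general {R : Type} [CommRing R] {G : Type} [Group G]
    (M : Rep R G) (σ : G) (hσ : σ ∈ Subgroup.center G) (lam : Rˣ)
    (hlam : IsUnit ((lam : R) - 1))
    (hact : ∀ m : M, (M.ρ σ) m = (lam : R) • m) :
    Subsingleton (groupCohomology.H1 M) :=
  groupCohomology.subsingleton_H1_of_forall_mem_coboundaries₁ fun f =>
    groupCohomology.mem_coboundaries₁_of_mem_center_of_forall_eq_smul f hσ hlam hact

/-- "Center kills" vanishing of `H¹`: if a central element `σ` of a finite group `G`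
acts on an `R[G]`-module `M` as multiplication by a unit `λ` with `λ - 1` invertible,
then `H¹(G, M) = 0`. -/
theorem H1_eq_zero_of_central_unit {R : Type} [CommRing R] {G : Type} [Group G] [Fintype G]
    (M : Rep R G) (σ : G) (hσ : σ ∈ Subgroup.center G) (lam : Rˣ)
    (hlam : IsUnit ((lam : R) - 1))
    (hact : ∀ m : M, (M.ρ σ) m = (lam : R) • m) :
    Subsingleton (groupCohomology.H1 M) :=
  H1_eq_zero_of_central_unit_general M σ hσ lam hlam hact
end

section
/- Let R be a Noetherian integrally closed domain and M a finitely generated R-module. Then the dual module M* = Hom_R(M, R) is reflexive, i.e., the natural map M* → Hom_R(Hom_R(M*, R), R) is an isomorphism. -/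
open Module

section Aux

variable {R : Type*} [CommRing R] [IsDomain R] [IsNoetherianRing R]
variable {M : Type*} [AddCommGroup M] [Module R M] [Module.Finite R M]

/-- Over a Noetherian ring, the dual of a finite module is finite. -/
lemma aux_dual_finite : Module.Finite R (Module.Dual R M) := by
  obtain ⟨n, p, hp⟩ := Module.Finite.exists_fin' R M
  have hinj : Function.Injective p.dualMap := by
    intro φ ψ h
    ext m
    obtain ⟨x, rfl⟩ := hp m
    exact LinearMap.congr_fun h x
  exact Module.Finite.of_injective p.dualMap hinj

/-- The cokernel of `M → M**` is torsion: every element of `M**` has a nonzero multiple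
in the image of the evaluation map. -/
lemma aux_exists_smul_eq_eval (ξ : Dual R (Dual R M)) :
    ∃ r ∈ nonZeroDivisors R, ∃ m : M, r • ξ = Dual.eval R M m := by
  classical
  have : Module.Finite R (Dual R M) := aux_dual_finite
  obtain ⟨n, ψ, hψ⟩ := Module.Finite.exists_fin (R := R) (M := Dual R M)
  set K := FractionRing R
  have hKinj : Function.Injective (algebraMap R K) := IsFractionRing.injective R K
  -- the images of elements of `M` inside `Kⁿ`
  set g : M → (Fin n → K) := fun m i => algebraMap R K (ψ i m) with hg
  set W : Submodule K (Fin n → K) := Submodule.span K (Set.range g) with hW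
  set v : Fin n → K := fun i => algebraMap R K (ξ (ψ i)) with hv
  -- Step 1: `v ∈ W`, by the double-annihilator theorem over the field `K`.
  have hvW : v ∈ W := by
    rw [← Subspace.forall_mem_dualAnnihilator_apply_eq_zero_iff]
    intro φ hφ
    rw [Submodule.mem_dualAnnihilator] at hφ
    have hφg : ∀ m : M, φ (g m) = 0 := fun m =>
      hφ _ (Submodule.subset_span (Set.mem_range_self m))
    set lam : Fin n → K := fun i => φ (fun j => if i = j then 1 else 0) with hlam
    have hφx : ∀ x : Fin n → K, φ x = ∑ i, x i * lam i := by
      intro x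
      conv_lhs => rw [pi_eq_sum_univ x, map_sum]
      refine Finset.sum_congr rfl fun i _ => ?_
      rw [map_smul, smul_eq_mul]
    obtain ⟨r, hr⟩ :=
      IsLocalization.exist_integer_multiples_of_finite (nonZeroDivisors R) (S := K) lam
    choose μ hμ using hr
    -- the relation `∑ μ i • ψ i = 0` in `M*`
    have hker : ∀ m : M, (∑ i, μ i * ψ i m) = 0 := by
      intro m
      apply hKinj
      rw [map_sum, map_zero]
      have : ∀ i, algebraMap R K (μ i * ψ i m) = g m i * ((r : R) • lam i) := by
        intro i
        rw [map_mul, hμ i, mul_comm]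
      rw [Finset.sum_congr rfl fun i _ => this i]
      have : ∑ i, g m i * ((r : R) • lam i) = (r : R) • ∑ i, g m i * lam i := by
        rw [Finset.smul_sum]
        exact Finset.sum_congr rfl fun i _ => by
          simp only [Algebra.smul_def]; ring
      rw [this, ← hφx (g m), hφg m, smul_zero]
    have hsum : (∑ i, μ i • ψ i : Dual R M) = 0 := by
      ext m
      simpa [LinearMap.sum_apply, LinearMap.smul_apply, smul_eq_mul] using hker m
    -- conclude `φ v = 0`
    have h0 : (r : R) • φ v = 0 := by
      rw [hφx v]
      rw [Finset.smul_sum]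
      have : ∀ i, (r : R) • (v i * lam i) = algebraMap R K (ξ (ψ i) * μ i) := by
        intro i
        simp only [map_mul, hμ, hv, Algebra.smul_def]; ring
      rw [Finset.sum_congr rfl fun i _ => this i, ← map_sum]
      have : (∑ i, ξ (ψ i) * μ i) = ξ (∑ i, μ i • ψ i) := by
        rw [map_sum]
        exact Finset.sum_congr rfl fun i _ => by rw [map_smul, smul_eq_mul, mul_comm]
      rw [this, hsum, map_zero, map_zero]
    have hrne : algebraMap R K (r : R) ≠ 0 :=
      IsFractionRing.to_map_ne_zero_of_mem_nonZeroDivisors r.2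
    have := h0
    rw [Algebra.smul_def] at this
    exact (mul_eq_zero.mp this).resolve_left hrne
  -- Step 2: clear denominators in the representation of `v` as a `K`-combination.
  obtain ⟨k, c, x, hx⟩ := Submodule.mem_span_set'.mp hvW
  obtain ⟨mj, hmj⟩ : ∃ mj : Fin k → M, ∀ j, (x j : Fin n → K) = g (mj j) := by
    choose mj hmj using fun j => (x j).2
    exact ⟨mj, fun j => (hmj j).symm⟩
  obtain ⟨r, hr⟩ :=
    IsLocalization.exist_integer_multiples_of_finite (nonZeroDivisors R) (S := K) c
  choose b hb using hr
  refine ⟨r, r.2, ∑ j, b j • mj j, ?_⟩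
  -- first prove the equality after pairing with each generator `ψ i`
  have key : ∀ i, (r : R) * ξ (ψ i) = ψ i (∑ j, b j • mj j) := by
    intro i
    apply hKinj
    have h1 : algebraMap R K ((r : R) * ξ (ψ i)) = (r : R) • v i := by
      rw [map_mul, hv, Algebra.smul_def]
    have h2 : (r : R) • v i = ∑ j, algebraMap R K (b j * ψ i (mj j)) := by
      rw [← hx]
      have : (∑ j, c j • (x j : Fin n → K)) i = ∑ j, c j * (x j : Fin n → K) i := by
        simp [Finset.sum_apply]
      rw [this, Finset.smul_sum]
      refine Finset.sum_congr rfl fun j _ => ?_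
      simp only [map_mul, hb, hmj, hg, smul_eq_mul, Algebra.smul_def]
      ring
    rw [h1, h2, ← map_sum]
    congr 1
    rw [map_sum]
    exact Finset.sum_congr rfl fun j _ => by rw [map_smul, smul_eq_mul]
  -- now extend to all of `M*` using that the `ψ i` generate
  ext φ
  obtain ⟨a, ha⟩ : ∃ a : Fin n → R, ∑ i, a i • ψ i = φ := by
    have : φ ∈ Submodule.span R (Set.range ψ) := hψ ▸ Submodule.mem_top
    exact (Submodule.mem_span_range_iff_exists_fun R).mp this
  have h1 : ((r : R) • ξ) φ = ∑ i, a i * ((r : R) * ξ (ψ i)) := by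
    rw [← ha, map_sum]
    refine Finset.sum_congr rfl fun i _ => ?_
    simp only [LinearMap.smul_apply, map_smul, smul_eq_mul]
  have h2 : (Dual.eval R M (∑ j, b j • mj j)) φ = ∑ i, a i * ψ i (∑ j, b j • mj j) := by
    rw [Dual.eval_apply, ← ha]
    simp only [LinearMap.sum_apply, LinearMap.smul_apply, smul_eq_mul]
  rw [LinearMap.smul_apply] at h1 ⊢
  rw [h1, h2]
  exact Finset.sum_congr rfl fun i _ => by rw [key i]

end Aux

/-- Over a Noetherian integrally closed domain `R`, the dual `M* = Hom_R(M, R)` of any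
finitely generated `R`-module `M` is reflexive. -/
theorem dual_isReflexive_of_noetherian_integrallyClosed
    (R : Type*) [CommRing R] [IsDomain R] [IsNoetherianRing R] [IsIntegrallyClosed R]
    (M : Type*) [AddCommGroup M] [Module R M] [Module.Finite R M] :
    Module.IsReflexive R (Module.Dual R M) := by
  constructor
  constructor
  · -- injectivity: `(ev_M)* ∘ ev_{M*} = id`
    intro ψ₁ ψ₂ h
    ext m
    have := LinearMap.congr_fun h (Dual.eval R M m)
    simpa using this
  · -- surjectivity
    intro Φ
    refine ⟨Φ ∘ₗ Dual.eval R M, ?_⟩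
    ext ξ
    obtain ⟨r, hr, m, hrm⟩ := aux_exists_smul_eq_eval ξ
    have hr0 : r ≠ 0 := nonZeroDivisors.ne_zero hr
    apply mul_left_cancel₀ hr0
    have h1 : r * (Dual.eval R (Dual R M) (Φ ∘ₗ Dual.eval R M)) ξ = (r • ξ) (Φ ∘ₗ Dual.eval R M) := by
      simp [Dual.eval_apply]
    have h2 : r * Φ ξ = Φ (r • ξ) := by rw [map_smul, smul_eq_mul]
    rw [h1, h2, hrm]
    simp [Dual.eval_apply]
end

section
/- Let R be a discrete valuation ring with fraction field Q, let M be a finitely generated R-module, and let r = dim_Q(Q ⊗_R M). Then the exterior power bidual ⋂^r_R M := (⋀^r_R Hom_R(M,R))* is canonically isomorphic to ⋀^r_R M_tf, where M_tf = M / M_tors is the torsion-free quotient of M. In particular, ⋂^r_R M is a free R-module of rank one. -/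
open TensorProduct

noncomputable section AuxExteriorPower

open ExteriorAlgebra

variable {R : Type*} [CommRing R] {P : Type*} [AddCommGroup P] [Module R P]
  {Q : Type*} [AddCommGroup Q] [Module R Q]

/-- Lift of an alternating map to the `n`-th exterior power. -/
noncomputable def liftAltPow {n : ℕ} (g : P [⋀^Fin n]→ₗ[R] Q) : ⋀[R]^n P →ₗ[R] Q :=
  (ExteriorAlgebra.liftAlternating (Pi.single n g)).comp (Submodule.subtype _)

@[simp] lemma liftAltPow_ιMulti {n : ℕ} (g : P [⋀^Fin n]→ₗ[R] Q) (v : Fin n → P)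
    (h : ExteriorAlgebra.ιMulti R n v ∈ ⋀[R]^n P) :
    liftAltPow g ⟨ExteriorAlgebra.ιMulti R n v, h⟩ = g v := by
  simp [liftAltPow]

lemma exteriorPower_span_ιMulti (n : ℕ) :
    Submodule.span R (Set.range fun v : Fin n → P =>
      (⟨ExteriorAlgebra.ιMulti R n v, ExteriorAlgebra.ιMulti_range R n ⟨v, rfl⟩⟩ : ⋀[R]^n P)) = ⊤ := by
  apply Submodule.map_injective_of_injective ((⋀[R]^n P).injective_subtype)
  rw [Submodule.map_span, Submodule.map_top, Submodule.range_subtype, ← Set.range_comp]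
  exact ExteriorAlgebra.ιMulti_span_fixedDegree R n

lemma exteriorPower_ext {n : ℕ} {f g : ⋀[R]^n P →ₗ[R] Q}
    (h : ∀ v : Fin n → P,
      f ⟨ExteriorAlgebra.ιMulti R n v, ExteriorAlgebra.ιMulti_range R n ⟨v, rfl⟩⟩
      = g ⟨ExteriorAlgebra.ιMulti R n v, ExteriorAlgebra.ιMulti_range R n ⟨v, rfl⟩⟩) : f = g :=
  LinearMap.ext_on (exteriorPower_span_ιMulti n) (by rintro x ⟨v, rfl⟩; exact h v)

lemma ιMulti_eq_det_smul {n : ℕ} (c : Module.Basis (Fin n) R P) (v : Fin n → P) :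
    ExteriorAlgebra.ιMulti R n v = c.det v • ExteriorAlgebra.ιMulti R n ⇑c := by
  have key : (ExteriorAlgebra.ιMulti R n (M := P)) =
      (LinearMap.toSpanSingleton R _ (ExteriorAlgebra.ιMulti R n ⇑c)).compAlternatingMap c.det := by
    apply Module.Basis.ext_alternating c
    intro w hw
    have hbij : Function.Bijective w := Finite.injective_iff_bijective.mp hw
    set σ : Equiv.Perm (Fin n) := Equiv.ofBijective w hbij with hσ
    have hws : (fun i => c (w i)) = ⇑c ∘ ⇑σ := rfl
    rw [hws, AlternatingMap.map_perm, LinearMap.compAlternatingMap_apply,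
      AlternatingMap.map_perm, Module.Basis.det_self, LinearMap.toSpanSingleton_apply]
    rcases Int.units_eq_one_or (Equiv.Perm.sign σ) with h | h <;>
      simp [h, Units.smul_def]
  conv_lhs => rw [key]
  simp

end AuxExteriorPower

noncomputable section AuxEquiv

open ExteriorAlgebra

variable {R : Type*} [CommRing R] {P : Type*} [AddCommGroup P] [Module R P]

lemma ιMulti_mk_eq_det_smul {n : ℕ} (c : Module.Basis (Fin n) R P) (v : Fin n → P)
    (h : ExteriorAlgebra.ιMulti R n v ∈ ⋀[R]^n P) (h' : ExteriorAlgebra.ιMulti R n ⇑c ∈ ⋀[R]^n P) :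
    (⟨ExteriorAlgebra.ιMulti R n v, h⟩ : ⋀[R]^n P)
      = c.det v • ⟨ExteriorAlgebra.ιMulti R n ⇑c, h'⟩ :=
  Subtype.ext (ιMulti_eq_det_smul c v)

/-- The top exterior power of a free module of rank `n` is free of rank one, via the
determinant with respect to a basis. -/
noncomputable def powEquivDet {n : ℕ} (c : Module.Basis (Fin n) R P) : (⋀[R]^n P) ≃ₗ[R] R :=
  LinearEquiv.ofLinear (liftAltPow c.det)
    (LinearMap.toSpanSingleton R _
      ⟨ExteriorAlgebra.ιMulti R n ⇑c, ExteriorAlgebra.ιMulti_range R n ⟨⇑c, rfl⟩⟩)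
    (by ext; simp [Module.Basis.det_self])
    (by
      apply exteriorPower_ext (R := R)
      intro v
      simp only [LinearMap.coe_comp, Function.comp_apply, liftAltPow_ιMulti,
        LinearMap.toSpanSingleton_apply, LinearMap.id_coe, id_eq]
      exact (ιMulti_mk_eq_det_smul c v _ _).symm)

@[simp] lemma powEquivDet_apply_ιMulti {n : ℕ} (c : Module.Basis (Fin n) R P) (v : Fin n → P)
    (h : ExteriorAlgebra.ιMulti R n v ∈ ⋀[R]^n P) :
    powEquivDet c ⟨ExteriorAlgebra.ιMulti R n v, h⟩ = c.det v := by
  simp [powEquivDet]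

/-- The dual of the top exterior power of a free module of rank `n` is free of rank one. -/
noncomputable def dualPowEquiv {n : ℕ} (c : Module.Basis (Fin n) R P) :
    R ≃ₗ[R] Module.Dual R (⋀[R]^n P) :=
  LinearEquiv.ofLinear (LinearMap.toSpanSingleton R _ (liftAltPow c.det))
    (LinearMap.applyₗ
      (⟨ExteriorAlgebra.ιMulti R n ⇑c, ExteriorAlgebra.ιMulti_range R n ⟨⇑c, rfl⟩⟩ : ⋀[R]^n P))
    (by
      refine LinearMap.ext fun ξ => ?_
      simp only [LinearMap.coe_comp, Function.comp_apply,
        LinearMap.toSpanSingleton_apply, LinearMap.id_coe, id_eq]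
      apply exteriorPower_ext (R := R)
      intro v
      simp only [LinearMap.smul_apply, liftAltPow_ιMulti, smul_eq_mul, LinearMap.applyₗ]
      rw [ιMulti_mk_eq_det_smul c v _ (ExteriorAlgebra.ιMulti_range R n ⟨⇑c, rfl⟩), map_smul]
      simp [mul_comm, LinearMap.applyₗ']
      rfl)
    (by ext; simp [Module.Basis.det_self, LinearMap.applyₗ_apply_apply])

@[simp] lemma dualPowEquiv_apply_ιMulti {n : ℕ} (c : Module.Basis (Fin n) R P) (a : R) (v : Fin n → P)
    (h : ExteriorAlgebra.ιMulti R n v ∈ ⋀[R]^n P) :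
    dualPowEquiv c a ⟨ExteriorAlgebra.ιMulti R n v, h⟩ = a * c.det v := by
  simp [dualPowEquiv]

end AuxEquiv

/-- Over a discrete valuation ring `R`, for a finitely generated module `M` of generic
rank `r`, the exterior power bidual `⋂^r M := Hom(⋀^r Hom(M,R), R)` is canonically
isomorphic to `⋀^r (M/M_tors)` (the isomorphism being the determinant pairing on
wedges); in particular it is free of rank one over `R`. -/
theorem exteriorPower_biDual_dvr (R : Type*) [CommRing R] [IsDomain R]
    [IsDiscreteValuationRing R]
    (M : Type*) [AddCommGroup M] [Module R M] [Module.Finite R M]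
    (r : ℕ)
    (hr : Module.rank (FractionRing R) (FractionRing R ⊗[R] M) = r) :
    (∃ Φ : (⋀[R]^r (M ⧸ Submodule.torsion R M)) ≃ₗ[R]
        Module.Dual R (⋀[R]^r (Module.Dual R M)),
      ∀ (v : Fin r → M) (F : Fin r → Module.Dual R M),
        Φ ⟨ExteriorAlgebra.ιMulti R r
              (fun j => Submodule.Quotient.mk (p := Submodule.torsion R M) (v j)),
            ExteriorAlgebra.ιMulti_range R r ⟨_, rfl⟩⟩
            ⟨ExteriorAlgebra.ιMulti R r F, ExteriorAlgebra.ιMulti_range R r ⟨F, rfl⟩⟩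
          = Matrix.det (Matrix.of fun i j => F i (v j))) ∧
    Module.Free R (Module.Dual R (⋀[R]^r (Module.Dual R M))) ∧
    Module.rank R (Module.Dual R (⋀[R]^r (Module.Dual R M))) = 1 := by
  classical
  -- the torsion-free quotient
  have hrankM : Module.rank R M = r := by
    haveI : IsLocalizedModule (nonZeroDivisors R)
        (TensorProduct.mk R (FractionRing R) M 1) :=
      (isLocalizedModule_iff_isBaseChange (nonZeroDivisors R) (FractionRing R) _).mpr
        (TensorProduct.isBaseChange R M (FractionRing R))
    have h1 := IsLocalizedModule.lift_rank_eq (nonZeroDivisors R)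
      (TensorProduct.mk R (FractionRing R) M 1) le_rfl
    rw [← IsFractionRing.rank_right_eq (R := R) (FractionRing R)] at h1
    rw [hr] at h1
    simpa using h1.symm
  have hrankN : Module.rank R (M ⧸ Submodule.torsion R M) = r := by
    have h2 := rank_quotient_add_rank_of_isDomain (Submodule.torsion R M)
    have h5 : Module.rank R (Submodule.torsion R M) = 0 :=
      rank_eq_zero_iff_isTorsion.mpr Submodule.torsion_isTorsion
    rw [h5, add_zero, hrankM] at h2
    exact h2
  haveI : Module.Free R (M ⧸ Submodule.torsion R M) := Module.free_of_finite_type_torsion_free'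
  have hfin : Module.finrank R (M ⧸ Submodule.torsion R M) = r := by
    have h3 := Module.finrank_eq_rank R (M ⧸ Submodule.torsion R M)
    rw [hrankN] at h3
    exact_mod_cast h3
  let b : Module.Basis (Fin r) R (M ⧸ Submodule.torsion R M) :=
    (Module.finBasis R (M ⧸ Submodule.torsion R M)).reindex (finCongr hfin)
  -- the dual of `M` is the dual of the torsion-free quotient
  let π : M →ₗ[R] (M ⧸ Submodule.torsion R M) := (Submodule.torsion R M).mkQ
  have hker : ∀ F : Module.Dual R M, Submodule.torsion R M ≤ LinearMap.ker F := by
    intro F x hx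
    obtain ⟨a, ha⟩ := (Submodule.mem_torsion_iff x).mp hx
    rw [Submonoid.smul_def] at ha
    have h4 : (a : R) * F x = 0 := by
      rw [← smul_eq_mul, ← map_smul, ha, map_zero]
    simp only [LinearMap.mem_ker]
    exact (mul_eq_zero.mp h4).resolve_left (nonZeroDivisors.ne_zero a.2)
  have hbij : Function.Bijective π.dualMap := by
    constructor
    · intro G₁ G₂ h
      ext x
      exact DFunLike.congr_fun h x
    · intro F
      refine ⟨(Submodule.torsion R M).liftQ F (hker F), ?_⟩
      ext x
      simp [π]
  let e : Module.Dual R (M ⧸ Submodule.torsion R M) ≃ₗ[R] Module.Dual R M :=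
    LinearEquiv.ofBijective π.dualMap hbij
  let c : Module.Basis (Fin r) R (Module.Dual R M) := b.dualBasis.map e
  refine ⟨⟨(powEquivDet b).trans (dualPowEquiv c), ?_⟩, Module.Free.of_equiv (dualPowEquiv c),
    by
      have h6 := (dualPowEquiv c).lift_rank_eq
      rw [Module.rank_self] at h6
      simpa using h6.symm⟩
  intro v F
  rw [LinearEquiv.trans_apply, powEquivDet_apply_ιMulti, dualPowEquiv_apply_ιMulti]
  have hmat : (Matrix.of fun i j => F i (v j)) =
      (c.toMatrix F).transpose * (b.toMatrix fun j => Submodule.Quotient.mk (v j)) := by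
    ext i j
    rw [Matrix.mul_apply]
    conv_lhs => rw [Matrix.of_apply, ← Module.Basis.sum_repr c (F i)]
    rw [LinearMap.sum_apply]
    refine Finset.sum_congr rfl fun k _ => ?_
    rw [LinearMap.smul_apply, smul_eq_mul, Matrix.transpose_apply,
      Module.Basis.toMatrix_apply, Module.Basis.toMatrix_apply, Module.Basis.map_apply,
      LinearEquiv.ofBijective_apply, LinearMap.dualMap_apply, Module.Basis.dualBasis_apply,
      Submodule.mkQ_apply]
  rw [Module.Basis.det_apply, Module.Basis.det_apply, hmat, Matrix.det_mul, Matrix.det_transpose, mul_comm]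
end
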